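/- arXiv:2405.10241 — 6 statements merged into one kernel-verified Lean document; each statement's English description precedes it below -/
import Mathlib

section
/- Let A be a perfect n-dimensional evolution algebra over K with natural basis {e_i} and invertible structure matrix. For any λ_1,...,λ_n, μ_1,...,μ_n ∈ K^×, let f_2 and f_3 be the linear maps with matrices diag(λ_1,...,λ_n) and diag(μ_1,...,μ_n) relative to the natural basis, and let f_1 be the unique linear map with f_1(e_i²) = λ_i μ_i e_i² for each i. Then (f_1, f_2, f_3) is a ternary automorphism of A. -/
open Matrix

/-- The evolution algebra product on `Fin n → K` determined by the structure
matrix `w`: the natural basis vectors `e i = Pi.single i 1` satisfy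
`e i * e j = 0` for `i ≠ j` and `e i * e i = fun k => w k i`. -/
def evMul {K : Type*} [Field K] {n : ℕ} (w : Matrix (Fin n) (Fin n) K)
    (x y : Fin n → K) : Fin n → K :=
  fun k => ∑ i, w k i * (x i * y i)

lemma evMul_eq_mulVec {K : Type*} [Field K] {n : ℕ} (w : Matrix (Fin n) (Fin n) K)
    (x y : Fin n → K) : evMul w x y = w.mulVec (fun i => x i * y i) := by
  funext k
  simp [evMul, Matrix.mulVec, dotProduct]

/-- in a perfect evolution algebra, for nonzero scalars
`l i, m i`, taking `f₂ = diag l`, `f₃ = diag m` and `f₁` the linear map with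
`f₁(eᵢ²) = lᵢ mᵢ eᵢ²`, the triple `(f₁,f₂,f₃)` is a ternary automorphism. -/
theorem stmt6 {K : Type*} [Field K] {n : ℕ} (w : Matrix (Fin n) (Fin n) K)
    (hw : IsUnit w) (l m : Fin n → K) (hl : ∀ i, l i ≠ 0) (hm : ∀ i, m i ≠ 0)
    (F : Matrix (Fin n) (Fin n) K)
    (hF : ∀ i, F.mulVec (fun k => w k i) = fun k => (l i * m i) * w k i) :
    IsUnit F ∧ IsUnit (Matrix.diagonal l) ∧ IsUnit (Matrix.diagonal m) ∧
      ∀ x y : Fin n → K,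
        F.mulVec (evMul w x y) =
          evMul w ((Matrix.diagonal l).mulVec x) ((Matrix.diagonal m).mulVec y) := by
  have key : F * w = w * Matrix.diagonal (fun i => l i * m i) := by
    ext k i
    have h := congrFun (hF i) k
    simpa [Matrix.mulVec, dotProduct, Matrix.mul_apply, Matrix.diagonal,
      mul_comm, Finset.mul_sum] using h
  have hD : IsUnit (Matrix.diagonal (fun i => l i * m i)) := by
    rw [Matrix.isUnit_iff_isUnit_det, Matrix.det_diagonal]
    exact (Finset.prod_ne_zero_iff.mpr fun i _ => mul_ne_zero (hl i) (hm i)).isUnit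
  refine ⟨?_, ?_, ?_, ?_⟩
  · have h1 : IsUnit (F.det * w.det) := by
      rw [← Matrix.det_mul, ← Matrix.isUnit_iff_isUnit_det]
      exact key ▸ hw.mul hD
    exact (Matrix.isUnit_iff_isUnit_det F).mpr (isUnit_of_mul_isUnit_left h1)
  · rw [Matrix.isUnit_iff_isUnit_det, Matrix.det_diagonal]
    exact (Finset.prod_ne_zero_iff.mpr fun i _ => hl i).isUnit
  · rw [Matrix.isUnit_iff_isUnit_det, Matrix.det_diagonal]
    exact (Finset.prod_ne_zero_iff.mpr fun i _ => hm i).isUnit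
  · intro x y
    rw [evMul_eq_mulVec, evMul_eq_mulVec, Matrix.mulVec_mulVec, key]
    funext k
    simp only [Matrix.mulVec, dotProduct, Matrix.mul_apply,
      Matrix.diagonal_apply, Finset.sum_mul]
    rw [Finset.sum_comm]
    refine Finset.sum_congr rfl fun i _ => ?_
    simp [Finset.mul_sum, Finset.sum_ite_eq, mul_comm, mul_assoc, mul_left_comm]
end

section
/- Let A be a perfect finite-dimensional evolution algebra with natural basis B and invertible structure matrix M. A triple of linear maps (d_1, d_2, d_3) on A is a ternary derivation of A if and only if the matrices of d_2 and d_3 with respect to B are diagonal and the matrix of d_1 equals M·(D_2 + D_3)·M^{-1}, where D_2 and D_3 are the (diagonal) matrices of d_2 and d_3. -/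
open Matrix

lemma key_inj {K : Type*} [Field K] {n : ℕ} {w : Matrix (Fin n) (Fin n) K}
    (hw : IsUnit w.det) {v : Fin n → K} (h : w.mulVec v = 0) : v = 0 := by
  have := congrArg (w⁻¹.mulVec) h
  rwa [Matrix.mulVec_mulVec, Matrix.nonsing_inv_mul w hw, Matrix.one_mulVec,
    Matrix.mulVec_zero] at this

lemma diag_mulVec {K : Type*} [Field K] {n : ℕ} {D : Matrix (Fin n) (Fin n) K}
    (hd : ∀ i j, i ≠ j → D i j = 0) (x : Fin n → K) :
    D.mulVec x = fun i => D i i * x i := by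
  funext i
  simp only [Matrix.mulVec, dotProduct]
  rw [Finset.sum_eq_single i]
  · intro b _ hb
    simp [hd i b (Ne.symm hb)]
  · simp

/-- in a perfect evolution algebra (invertible structure matrix
`w`), a triple `(d₁,d₂,d₃)` is a ternary derivation iff `d₂` and `d₃` are
diagonal and `d₁ = w·(d₂+d₃)·w⁻¹`. -/
theorem stmt10 {K : Type*} [Field K] {n : ℕ} (w : Matrix (Fin n) (Fin n) K)
    (hw : IsUnit w.det) (D1 D2 D3 : Matrix (Fin n) (Fin n) K) :
    (∀ x y : Fin n → K,
        D1.mulVec (evMul w x y) =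
          evMul w (D2.mulVec x) y + evMul w x (D3.mulVec y)) ↔
      ((∀ i j, i ≠ j → D2 i j = 0) ∧ (∀ i j, i ≠ j → D3 i j = 0) ∧
        D1 = w * (D2 + D3) * w⁻¹) := by
  constructor
  · intro h
    -- off diagonal entries vanish
    have hoff : ∀ j l : Fin n, j ≠ l → D2 l j = 0 ∧ D3 j l = 0 := by
      intro j l hjl
      have h' := h (Pi.single j 1) (Pi.single l 1)
      have hLHS : evMul w (Pi.single j (1:K)) (Pi.single l 1) = 0 := by
        funext k
        simp only [evMul, Pi.single_apply, Pi.zero_apply]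
        apply Finset.sum_eq_zero
        intro i _
        by_cases hij : i = j
        · subst hij
          simp [if_neg hjl]
        · simp [hij]
      have h2 : evMul w (D2.mulVec (Pi.single j (1:K))) (Pi.single l 1)
          = fun k => w k l * D2 l j := by
        funext k
        simp only [evMul, Pi.single_apply]
        rw [Finset.sum_eq_single l]
        · simp [Matrix.mulVec, dotProduct, Pi.single_apply, Finset.sum_ite_eq', mul_comm]
        · intro b _ hb; simp [hb]
        · simp
      have h3 : evMul w (Pi.single j (1:K)) (D3.mulVec (Pi.single l 1))
          = fun k => w k j * D3 j l := by
        funext k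
        simp only [evMul, Pi.single_apply]
        rw [Finset.sum_eq_single j]
        · simp [Matrix.mulVec, dotProduct, Pi.single_apply, Finset.sum_ite_eq', mul_comm]
        · intro b _ hb; simp [hb]
        · simp
      rw [hLHS, h2, h3, Matrix.mulVec_zero] at h'
      -- h' : 0 = (fun k => w k l * D2 l j) + fun k => w k j * D3 j l
      set v : Fin n → K := fun i => if i = l then D2 l j else if i = j then D3 j l else 0
        with hv
      have hWv : w.mulVec v = 0 := by
        funext k
        have hk := congrFun h' k
        simp only [Pi.add_apply, Pi.zero_apply] at hk
        simp only [Matrix.mulVec, dotProduct, hv, Pi.zero_apply]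
        rw [show ∑ i, w k i * (if i = l then D2 l j else if i = j then D3 j l else 0)
            = ∑ i, ((if i = l then w k l * D2 l j else 0) +
                (if i = j then w k j * D3 j l else 0)) from ?_,
          Finset.sum_add_distrib]
        · simp [← hk]
        · apply Finset.sum_congr rfl
          intro i _
          by_cases hil : i = l
          · subst hil
            have : i ≠ j := fun hh => hjl hh.symm
            simp [this]
          · by_cases hij : i = j
            · subst hij
              simp [hil, hjl]
            · simp [hil, hij]
      have hv0 := key_inj hw hWv
      constructor
      · have := congrFun hv0 l
        simpa [hv] using this
      · have := congrFun hv0 j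
        simpa [hv, hjl] using this
    have h2d : ∀ i j, i ≠ j → D2 i j = 0 := fun i j hij => (hoff j i (Ne.symm hij)).1
    have h3d : ∀ i j, i ≠ j → D3 i j = 0 := fun i j hij => (hoff i j hij).2
    refine ⟨h2d, h3d, ?_⟩
    have hmain : D1 * w = w * (D2 + D3) := by
      ext k j
      have h' := h (Pi.single j 1) (Pi.single j 1)
      have hx : evMul w (Pi.single j (1:K)) (Pi.single j 1) = fun k => w k j := by
        funext k
        simp only [evMul, Pi.single_apply]
        rw [Finset.sum_eq_single j] <;> simp_all
      have h2 : evMul w (D2.mulVec (Pi.single j (1:K))) (Pi.single j 1)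
          = fun k => w k j * D2 j j := by
        funext k
        simp only [evMul, Pi.single_apply]
        rw [Finset.sum_eq_single j]
        · simp [Matrix.mulVec, dotProduct, Pi.single_apply, Finset.sum_ite_eq', mul_comm]
        · intro b _ hb; simp [hb]
        · simp
      have h3 : evMul w (Pi.single j (1:K)) (D3.mulVec (Pi.single j 1))
          = fun k => w k j * D3 j j := by
        funext k
        simp only [evMul, Pi.single_apply]
        rw [Finset.sum_eq_single j]
        · simp [Matrix.mulVec, dotProduct, Pi.single_apply, Finset.sum_ite_eq', mul_comm]
        · intro b _ hb; simp [hb]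
        · simp
      rw [hx, h2, h3] at h'
      have hk := congrFun h' k
      simp only [Pi.add_apply] at hk
      have hL : (D1 * w) k j = D1.mulVec (fun k => w k j) k := by
        simp [Matrix.mul_apply, Matrix.mulVec, dotProduct]
      have hR : (w * (D2 + D3)) k j = w k j * D2 j j + w k j * D3 j j := by
        rw [Matrix.mul_apply, Finset.sum_eq_single j]
        · simp [mul_add]
        · intro b _ hb
          simp [Matrix.add_apply, h2d b j hb, h3d b j hb]
        · simp
      rw [hL, hR, hk]
    rw [← hmain, Matrix.mul_assoc, Matrix.mul_nonsing_inv w hw, Matrix.mul_one]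
  · rintro ⟨h2d, h3d, hD1⟩
    intro x y
    have hmain : D1 * w = w * (D2 + D3) := by
      rw [hD1, Matrix.mul_assoc, Matrix.nonsing_inv_mul w hw, Matrix.mul_one]
    rw [evMul_eq_mulVec, evMul_eq_mulVec, evMul_eq_mulVec, Matrix.mulVec_mulVec, hmain,
      ← Matrix.mulVec_mulVec, ← Matrix.mulVec_add]
    have hsum : ∀ i j, i ≠ j → (D2 + D3) i j = 0 := fun i j hij => by
      simp [Matrix.add_apply, h2d i j hij, h3d i j hij]
    rw [diag_mulVec hsum, diag_mulVec h2d, diag_mulVec h3d]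
    refine congrArg w.mulVec (funext fun i => ?_)
    simp only [Pi.add_apply, Matrix.add_apply]
    ring
end

section
/- The Lie algebra of ternary derivations of a perfect n-dimensional evolution algebra A over a field K is isomorphic (as a Lie algebra, with componentwise bracket) to the abelian Lie algebra D_n(K) × D_n(K), where D_n(K) is the space of diagonal n×n matrices over K. Concretely, the map sending a pair of diagonal matrices (D_2, D_3) to the triple (M(D_2+D_3)M^{-1}, D_2, D_3), where M is the structure matrix, is a Lie algebra isomorphism onto Tder(A). -/
open Matrix

lemma evMul_eq {K : Type*} [Field K] {n : ℕ} (w : Matrix (Fin n) (Fin n) K)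
    (x y : Fin n → K) : evMul w x y = w.mulVec (x * y) := by
  funext k
  simp [evMul, Matrix.mulVec, dotProduct]

lemma eq_diag {K : Type*} [Field K] {n : ℕ} (A : Matrix (Fin n) (Fin n) K)
    (h : ∀ i j, i ≠ j → A i j = 0) : A = diagonal (fun i => A i i) := by
  ext i j
  by_cases hij : i = j
  · subst hij; simp
  · simp [Matrix.diagonal_apply_ne _ hij, h i j hij]

lemma diag_comm {K : Type*} [Field K] {n : ℕ} (A B : Matrix (Fin n) (Fin n) K)
    (hA : ∀ i j, i ≠ j → A i j = 0) (hB : ∀ i j, i ≠ j → B i j = 0) :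
    A * B = B * A := by
  rw [eq_diag A hA, eq_diag B hB, diagonal_mul_diagonal, diagonal_mul_diagonal]
  exact congrArg diagonal (funext fun i => mul_comm _ _)

/-- for a perfect `n`-dimensional evolution algebra with
structure matrix `w`, the map `(D₂,D₃) ↦ (w(D₂+D₃)w⁻¹, D₂, D₃)` is a linear
bijection from pairs of diagonal matrices onto the set of ternary derivations
which preserves the (componentwise commutator) Lie brackets; hence
`Tder(A) ≅ 𝒟ₙ(K) × 𝒟ₙ(K)` as Lie algebras. -/
theorem stmt11 {K : Type*} [Field K] {n : ℕ} (w : Matrix (Fin n) (Fin n) K)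
    (hw : IsUnit w.det) :
    Set.BijOn
      (fun p : Matrix (Fin n) (Fin n) K × Matrix (Fin n) (Fin n) K =>
        (w * (p.1 + p.2) * w⁻¹, p.1, p.2))
      {p | (∀ i j, i ≠ j → p.1 i j = 0) ∧ (∀ i j, i ≠ j → p.2 i j = 0)}
      {t | ∀ x y : Fin n → K,
        t.1.mulVec (evMul w x y) =
          evMul w (t.2.1.mulVec x) y + evMul w x (t.2.2.mulVec y)} ∧
    (∀ p q : Matrix (Fin n) (Fin n) K × Matrix (Fin n) (Fin n) K,
      (w * ((p + q).1 + (p + q).2) * w⁻¹, (p + q).1, (p + q).2) =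
        (w * (p.1 + p.2) * w⁻¹, p.1, p.2) + (w * (q.1 + q.2) * w⁻¹, q.1, q.2)) ∧
    (∀ (c : K) (p : Matrix (Fin n) (Fin n) K × Matrix (Fin n) (Fin n) K),
      (w * ((c • p).1 + (c • p).2) * w⁻¹, (c • p).1, (c • p).2) =
        c • (w * (p.1 + p.2) * w⁻¹, p.1, p.2)) ∧
    (∀ p q : Matrix (Fin n) (Fin n) K × Matrix (Fin n) (Fin n) K,
      p ∈ {p : Matrix (Fin n) (Fin n) K × Matrix (Fin n) (Fin n) K |
            (∀ i j, i ≠ j → p.1 i j = 0) ∧ (∀ i j, i ≠ j → p.2 i j = 0)} →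
      q ∈ {p : Matrix (Fin n) (Fin n) K × Matrix (Fin n) (Fin n) K |
            (∀ i j, i ≠ j → p.1 i j = 0) ∧ (∀ i j, i ≠ j → p.2 i j = 0)} →
      (w * ((p.1 * q.1 - q.1 * p.1) + (p.2 * q.2 - q.2 * p.2)) * w⁻¹,
          p.1 * q.1 - q.1 * p.1, p.2 * q.2 - q.2 * p.2) =
        ((w * (p.1 + p.2) * w⁻¹) * (w * (q.1 + q.2) * w⁻¹) -
            (w * (q.1 + q.2) * w⁻¹) * (w * (p.1 + p.2) * w⁻¹),
          p.1 * q.1 - q.1 * p.1, p.2 * q.2 - q.2 * p.2)) := by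
  refine ⟨⟨?_, ?_, ?_⟩, ?_, ?_, ?_⟩
  · -- MapsTo
    rintro ⟨A, B⟩ ⟨hA, hB⟩ x y
    simp only
    rw [evMul_eq, evMul_eq, evMul_eq, mulVec_mulVec,
      Matrix.nonsing_inv_mul_cancel_right _ _ hw, ← Matrix.mulVec_mulVec,
      ← Matrix.mulVec_add]
    refine congrArg _ ?_
    funext k
    rw [eq_diag A hA, eq_diag B hB]
    simp only [Matrix.add_mulVec, Pi.add_apply, mulVec_diagonal, Pi.mul_apply]
    ring
  · -- InjOn
    rintro ⟨A, B⟩ _ ⟨A', B'⟩ _ h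
    simp only [Prod.mk.injEq] at h
    exact Prod.ext h.2.1 h.2.2
  · -- SurjOn
    rintro ⟨t1, t2, t3⟩ ht
    simp only [Set.mem_setOf_eq] at ht
    have key : ∀ x y : Fin n → K,
        t1.mulVec (w.mulVec (x * y)) =
          w.mulVec (t2.mulVec x * y + x * t3.mulVec y) := by
      intro x y
      have := ht x y
      rwa [evMul_eq, evMul_eq, evMul_eq, ← Matrix.mulVec_add] at this
    have hd : ∀ i j : Fin n, i ≠ j → t2 j i = 0 ∧ t3 i j = 0 := by
      intro i j hij
      have hz : (Pi.single i 1 : Fin n → K) * Pi.single j 1 = 0 := by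
        funext k
        by_cases hk : k = i
        · subst hk; simp [Pi.single_apply, Ne.symm hij, hij]
        · simp [Pi.single_apply, hk]
      have h0 := key (Pi.single i 1) (Pi.single j 1)
      rw [hz] at h0
      simp only [Matrix.mulVec_zero] at h0
      have hv : (t2.mulVec (Pi.single i 1) * Pi.single j 1 +
          Pi.single i 1 * t3.mulVec (Pi.single j 1) : Fin n → K) = 0 := by
        have := congrArg (fun v => w⁻¹.mulVec v) h0
        simpa [Matrix.mulVec_mulVec, Matrix.nonsing_inv_mul _ hw] using this.symm
      constructor
      · have := congrFun hv j
        simpa [Pi.single_apply, Ne.symm hij, hij] using this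
      · have := congrFun hv i
        simpa [Pi.single_apply, Ne.symm hij, hij] using this
    have ht2 : ∀ i j, i ≠ j → t2 i j = 0 := fun i j hij => (hd j i (Ne.symm hij)).1
    have ht3 : ∀ i j, i ≠ j → t3 i j = 0 := fun i j hij => (hd i j hij).2
    have hcol : ∀ b : Fin n,
        (t1 * w).mulVec (Pi.single b 1) = (w * (t2 + t3)).mulVec (Pi.single b 1) := by
      intro b
      have hb := key (Pi.single b 1) (Pi.single b 1)
      have hsb : (Pi.single b 1 : Fin n → K) * Pi.single b 1 = Pi.single b 1 := by
        funext m; by_cases hm : m = b <;> simp [Pi.single_apply, hm]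
      rw [hsb] at hb
      have hvb : (t2.mulVec (Pi.single b 1) * Pi.single b 1 +
          Pi.single b 1 * t3.mulVec (Pi.single b 1) : Fin n → K) =
          (t2 + t3).mulVec (Pi.single b 1) := by
        funext m
        by_cases hm : m = b
        · subst hm; simp [Pi.single_apply, Matrix.add_mulVec]
        · simp [Pi.single_apply, hm, Matrix.add_mulVec, ht2 m b hm, ht3 m b hm]
      rw [hvb, Matrix.mulVec_mulVec, Matrix.mulVec_mulVec] at hb
      exact hb
    have hmat : t1 * w = w * (t2 + t3) := by
      ext k i
      have := congrFun (hcol i) k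
      simpa using this
    rw [Set.mem_image]
    refine ⟨(t2, t3), ⟨ht2, ht3⟩, ?_⟩
    show (w * (t2 + t3) * w⁻¹, t2, t3) = (t1, t2, t3)
    refine Prod.ext ?_ rfl
    calc w * (t2 + t3) * w⁻¹ = t1 * w * w⁻¹ := by rw [hmat]
      _ = t1 := Matrix.mul_nonsing_inv_cancel_right _ _ hw
  · -- additive
    intro p q
    simp only [Prod.fst_add, Prod.snd_add, Prod.mk_add_mk]
    refine Prod.ext ?_ rfl
    simp only
    noncomm_ring
  · -- smul
    intro c p
    simp only [Prod.smul_fst, Prod.smul_snd, Prod.smul_mk]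
    refine Prod.ext ?_ rfl
    simp only
    rw [← smul_add, Matrix.mul_smul, Matrix.smul_mul]
  · -- bracket
    rintro p q ⟨hp1, hp2⟩ ⟨hq1, hq2⟩
    refine Prod.ext ?_ rfl
    simp only
    have h12 : p.1 * q.2 = q.2 * p.1 := diag_comm _ _ hp1 hq2
    have h21 : p.2 * q.1 = q.1 * p.2 := diag_comm _ _ hp2 hq1
    have hww : w⁻¹ * w = 1 := Matrix.nonsing_inv_mul _ hw
    have keym : ∀ A B : Matrix (Fin n) (Fin n) K,
        (w * A * w⁻¹) * (w * B * w⁻¹) = w * (A * B) * w⁻¹ := by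
      intro A B
      calc (w * A * w⁻¹) * (w * B * w⁻¹)
          = w * A * (w⁻¹ * w) * (B * w⁻¹) := by noncomm_ring
        _ = w * (A * B) * w⁻¹ := by rw [hww]; noncomm_ring
    rw [keym, keym, ← Matrix.sub_mul, ← Matrix.mul_sub]
    congr 2
    simp only [add_mul, mul_add]
    rw [h12, h21]
    abel
end

section
/- Let M be an n×n matrix over a field K and let G be an invertible matrix such that G·M = M' where M' is the reduced row-echelon form of M. Then G is a generalised inverse of M, i.e. M·G·M = M. -/
/-- if `G` is an invertible matrix with `G * M` equal to the
reduced row-echelon form `[[I, C], [0, 0]]` of `M`, then `G` is a generalised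
inverse of `M`, i.e. `M * G * M = M`. -/
theorem stmt15 {K : Type*} [Field K] (r s : ℕ)
    (M G : Matrix (Fin r ⊕ Fin s) (Fin r ⊕ Fin s) K)
    (C : Matrix (Fin r) (Fin s) K) (hG : IsUnit G)
    (h : G * M = Matrix.fromBlocks (1 : Matrix (Fin r) (Fin r) K) C 0 0) :
    M * G * M = M := by
  set N : Matrix (Fin r ⊕ Fin s) (Fin r ⊕ Fin s) K :=
    Matrix.fromBlocks (1 : Matrix (Fin r) (Fin r) K) C 0 0 with hN
  have hid : N * N = N := by
    rw [hN]; simp [Matrix.fromBlocks_multiply]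
  have key : G * (M * G * M) = G * M := by
    calc G * (M * G * M) = (G * M) * (G * M) := by
          simp only [mul_assoc]
    _ = G * M := by rw [h, hid]
  exact hG.mul_left_cancel key
end

section
/- Let A be the 2-dimensional evolution algebra over K with natural basis {e_1, e_2} and products e_1² = e_1 − e_2, e_2² = −e_1 + e_2, e_1e_2 = e_2e_1 = 0 (structure matrix [[1,−1],[−1,1]]). A triple of linear maps (d_1,d_2,d_3), with matrices (x_{ij}), (y_{ij}), (z_{ij}) relative to {e_1,e_2}, is a ternary derivation of A if and only if: z_{12} = y_{21}, z_{21} = y_{12}, y_{11} + z_{11} = y_{22} + z_{22} =: λ, x_{11} = λ + x_{12}, and x_{22} = λ + x_{21}. -/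
open Matrix

/-- ternary derivations of the 2-dimensional evolution algebra
`A₅` with structure matrix `!![1,-1;-1,1]` (so `e₁² = e₁ - e₂`,
`e₂² = -e₁ + e₂`). -/
theorem stmt18 {K : Type*} [Field K]
    (X Y Z : Matrix (Fin 2) (Fin 2) K) :
    (∀ x y : Fin 2 → K,
        X.mulVec (evMul !![(1 : K), -1; -1, 1] x y) =
          evMul !![(1 : K), -1; -1, 1] (Y.mulVec x) y +
            evMul !![(1 : K), -1; -1, 1] x (Z.mulVec y)) ↔
      (Z 0 1 = Y 1 0 ∧ Z 1 0 = Y 0 1 ∧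
        Y 0 0 + Z 0 0 = Y 1 1 + Z 1 1 ∧
        X 0 0 = (Y 0 0 + Z 0 0) + X 0 1 ∧
        X 1 1 = (Y 0 0 + Z 0 0) + X 1 0) := by
  constructor
  · intro h
    have h00 := congrFun (h ![1,0] ![1,0]) 0
    have h01 := congrFun (h ![1,0] ![0,1]) 0
    have h10 := congrFun (h ![0,1] ![1,0]) 0
    have h11 := congrFun (h ![0,1] ![0,1]) 0
    simp [evMul, mulVec, dotProduct, Fin.sum_univ_two, Pi.add_apply,
      Matrix.cons_val_zero, Matrix.cons_val_one, Matrix.head_cons] at h00 h01 h10 h11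
    refine ⟨by linear_combination -h01, by linear_combination h10, ?_, ?_, ?_⟩
    · linear_combination -(h00 + h11)
    · linear_combination h00
    · have h11' := congrFun (h ![0,1] ![0,1]) 1
      simp [evMul, mulVec, dotProduct, Fin.sum_univ_two] at h11'
      linear_combination h11' + h00 + h11
  · rintro ⟨h1, h2, h3, h4, h5⟩ x y
    funext k
    fin_cases k <;> simp [evMul, mulVec, dotProduct, Fin.sum_univ_two]
    · linear_combination (x 0 * y 0 - x 1 * y 1) * h4 + x 1 * y 0 * h2 -
        x 0 * y 1 * h1 - x 1 * y 1 * h3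
    · linear_combination -(x 0 * y 0 - x 1 * y 1) * h5 - x 1 * y 0 * h2 +
        x 0 * y 1 * h1 + x 1 * y 1 * h3
end

section
/- Let A be the 2-dimensional evolution algebra over K with natural basis {e_1,e_2} and structure matrix [[0,1],[0,0]], i.e. products e_1² = 0, e_2² = e_1, e_1e_2 = e_2e_1 = 0. Then a triple (d_1,d_2,d_3) of linear maps with matrices (x_{ij}), (y_{ij}), (z_{ij}) relative to the basis is a ternary derivation if and only if all three matrices are upper triangular (x_{21} = y_{21} = z_{21} = 0) and x_{11} = y_{22} + z_{22}. -/
open Matrix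

/-- ternary derivations of the 2-dimensional evolution algebra
`A₆` with structure matrix `!![0,1;0,0]` (so `e₁² = 0`, `e₂² = e₁`):
all three matrices are upper triangular and `x₁₁ = y₂₂ + z₂₂`. -/
theorem stmt19 {K : Type*} [Field K]
    (X Y Z : Matrix (Fin 2) (Fin 2) K) :
    (∀ x y : Fin 2 → K,
        X.mulVec (evMul !![(0 : K), 1; 0, 0] x y) =
          evMul !![(0 : K), 1; 0, 0] (Y.mulVec x) y +
            evMul !![(0 : K), 1; 0, 0] x (Z.mulVec y)) ↔
      (X 1 0 = 0 ∧ Y 1 0 = 0 ∧ Z 1 0 = 0 ∧ X 0 0 = Y 1 1 + Z 1 1) := by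
  constructor
  · intro h
    have h1 := congrFun (h ![0,1] ![0,1]) 1
    have h2 := congrFun (h ![1,0] ![0,1]) 0
    have h3 := congrFun (h ![0,1] ![1,0]) 0
    have h4 := congrFun (h ![0,1] ![0,1]) 0
    simp [evMul, Matrix.mulVec, dotProduct, Fin.sum_univ_two] at h1 h2 h3 h4
    exact ⟨h1, h2.symm, h3.symm, by rw [h4]⟩
  · rintro ⟨hX, hY, hZ, hE⟩ x y
    funext k
    fin_cases k <;>
      simp [evMul, Matrix.mulVec, dotProduct, Fin.sum_univ_two, hX, hY, hZ, hE] <;>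
      ring
end
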